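/- The connection matrix L of the Möbius–Kantor graph MK, a 40×40 integer matrix indexed by the 16 vertices and 24 edges of MK with L(x,y) = 1 if the simplices x and y intersect and L(x,y) = 0 otherwise, is unimodular with determinant equal to 1 (the Fermi characteristic ∏ₓ (−1)^dim(x) = (+1)¹⁶·(−1)²⁴ of MK). -/

import Mathlib

/-- The underlying relation of the Möbius–Kantor graph `GP(8,3)`. -/
def mkRel (v w : ZMod 8 × Fin 2) : Bool :=
  (v.2 == 0 && w.2 == 0 && (w.1 == v.1 + 1 || v.1 == w.1 + 1)) ||
  ((v.2 == 0 && w.2 == 1 || v.2 == 1 && w.2 == 0) && v.1 == w.1) ||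
  (v.2 == 1 && w.2 == 1 && (w.1 == v.1 + 3 || v.1 == w.1 + 3))

/-- The Möbius–Kantor graph, i.e. the generalized Petersen graph `GP(8,3)`. -/
def MK : SimpleGraph (ZMod 8 × Fin 2) where
  Adj v w := mkRel v w = true
  symm := ⟨by intro v w; revert v w; decide⟩
  loopless := ⟨by intro v; revert v; decide⟩

instance : DecidableRel MK.Adj := fun v w => inferInstanceAs (Decidable (mkRel v w = true))

/-- A simplex of the (one-dimensional) simplicial complex of `MK`: either a vertex
(a singleton) or an edge (a two-element set of adjacent vertices). -/
def IsMKSimplex (s : Finset (ZMod 8 × Fin 2)) : Prop :=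
  s.card = 1 ∨ ∃ a b, MK.Adj a b ∧ s = {a, b}

instance (s : Finset (ZMod 8 × Fin 2)) : Decidable (IsMKSimplex s) := by
  unfold IsMKSimplex; infer_instance

/-- The type of the 40 simplices (16 vertices and 24 edges) of `MK`. -/
def MKSimplex := {s : Finset (ZMod 8 × Fin 2) // IsMKSimplex s}

instance : Fintype MKSimplex := by unfold MKSimplex; infer_instance
instance : DecidableEq MKSimplex := by unfold MKSimplex; infer_instance

/-- The connection matrix of `MK`: `L x y = 1` if the simplices `x` and `y`
intersect, and `0` otherwise. -/
def connL : Matrix MKSimplex MKSimplex ℤ :=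
  fun x y => if (x.val ∩ y.val).Nonempty then 1 else 0

/-! Order the simplices vertices first. The connection matrix of a one-dimensional complex then
has the block form `[[1, B], [Bᵀ, D]]`, where `B` is the vertex–edge incidence matrix. Two distinct
edges meet in at most one vertex and an edge meets itself in two, so `D = BᵀB - 1`: the Schur
complement `D - BᵀB` is `-1`, and `det L = (-1) ^ #edges`, which is `1` for the 24 edges of `MK`. -/

open Finset Matrix

section OneDimensionalComplex

variable {V : Type*} {p : Finset V → Prop}

lemma prod_neg_one_pow_card_sub_one [Fintype (Subtype p)]
    (hdim : ∀ s, p s → s.card = 1 ∨ s.card = 2) :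
    ∏ x : Subtype p, (-1 : ℤ) ^ (x.1.card - 1) =
      (-1) ^ Fintype.card {x : Subtype p // ¬x.1.card = 1} := by
  rw [← (Equiv.sumCompl fun x : Subtype p => x.1.card = 1).prod_comp, Fintype.prod_sum_type]
  have hedge : ∀ x : {x : Subtype p // ¬x.1.card = 1}, x.1.1.card = 2 :=
    fun x => (hdim _ x.1.2).resolve_left x.2
  have hvertex : ∀ x : {x : Subtype p // x.1.card = 1}, x.1.1.card - 1 = 0 :=
    fun x => by simp [x.2]
  simp [hvertex, hedge]

variable [DecidableEq V]

def connectionMatrix (p : Finset V → Prop) : Matrix (Subtype p) (Subtype p) ℤ :=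
  fun x y => if (x.1 ∩ y.1).Nonempty then 1 else 0

lemma connectionMatrix_of_card_eq_one {x y : Subtype p} (hx : x.1.card = 1) (hy : y.1.card = 1) :
    connectionMatrix p x y = if x = y then 1 else 0 := by
  obtain ⟨a, ha⟩ := card_eq_one.1 hx
  obtain ⟨b, hb⟩ := card_eq_one.1 hy
  simp only [connectionMatrix, Subtype.ext_iff, ha, hb, singleton_inter, mem_singleton,
    singleton_inj]
  split_ifs <;> simp_all

lemma connectionMatrix_sub_card_inter (hdim : ∀ s, p s → s.card = 1 ∨ s.card = 2)
    {x y : Subtype p} (hx : ¬x.1.card = 1) (hy : ¬y.1.card = 1) :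
    connectionMatrix p x y - #(x.1 ∩ y.1) = if x = y then -1 else 0 := by
  have hx2 : x.1.card = 2 := (hdim _ x.2).resolve_left hx
  have hy2 : y.1.card = 2 := (hdim _ y.2).resolve_left hy
  split_ifs with hxy
  · subst hxy
    simp [connectionMatrix, hx2, ← card_pos]
  · have hle : #(x.1 ∩ y.1) ≤ 1 := by
      by_contra! h
      have hx' : x.1 ∩ y.1 = x.1 := eq_of_subset_of_card_le inter_subset_left (by omega)
      have hy' : x.1 ∩ y.1 = y.1 := eq_of_subset_of_card_le inter_subset_right (by omega)
      exact hxy (Subtype.ext (hx'.symm.trans hy'))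
    rcases Nat.le_one_iff_eq_zero_or_eq_one.1 hle with h | h
    · simp [connectionMatrix, card_eq_zero.1 h]
    · simp [connectionMatrix, ← card_pos, h]

variable [Fintype (Subtype p)]

lemma sum_vertex_connectionMatrix_mul_eq_card_inter (hvert : ∀ s, p s → ∀ v ∈ s, p {v})
    (x y : Subtype p) :
    ∑ v : {v : Subtype p // v.1.card = 1}, connectionMatrix p x v * connectionMatrix p v y =
      #(x.1 ∩ y.1) := by
  have hterm : ∀ v : {v : Subtype p // v.1.card = 1},
      connectionMatrix p x v * connectionMatrix p v y = if v.1.1 ⊆ x.1 ∩ y.1 then 1 else 0 := by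
    rintro ⟨⟨s, hs⟩, hcard⟩
    obtain ⟨a, rfl⟩ := card_eq_one.1 hcard
    by_cases hx : a ∈ x.1 <;> by_cases hy : a ∈ y.1 <;>
      simp [connectionMatrix, hx, hy]
  rw [Fintype.sum_congr _ _ hterm, sum_boole, Nat.cast_inj]
  symm
  refine card_bij (fun a ha => ⟨⟨{a}, hvert _ x.2 a (mem_inter.1 ha).1⟩, card_singleton a⟩)
    (fun a ha => by simpa using ha) (fun a _ b _ h => by simpa [Subtype.ext_iff] using h) ?_
  rintro ⟨⟨s, hs⟩, hcard⟩ hsub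
  obtain ⟨a, rfl⟩ := card_eq_one.1 hcard
  exact ⟨a, by simpa using hsub, rfl⟩

theorem det_connectionMatrix (hdim : ∀ s, p s → s.card = 1 ∨ s.card = 2)
    (hvert : ∀ s, p s → ∀ v ∈ s, p {v}) :
    (connectionMatrix p).det = ∏ x : Subtype p, (-1 : ℤ) ^ (x.1.card - 1) := by
  set N := (connectionMatrix p).submatrix (Equiv.sumCompl fun x : Subtype p => x.1.card = 1)
    (Equiv.sumCompl fun x : Subtype p => x.1.card = 1)
  have hvertices : N.toBlocks₁₁ = 1 := by
    ext v w
    simp [N, toBlocks₁₁, connectionMatrix_of_card_eq_one v.2 w.2, one_apply, Subtype.ext_iff]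
  have hschur : N.toBlocks₂₂ - N.toBlocks₂₁ * N.toBlocks₁₂ = -1 := by
    ext e f
    simp [N, toBlocks₂₂, toBlocks₂₁, toBlocks₁₂, Matrix.mul_apply,
      sum_vertex_connectionMatrix_mul_eq_card_inter hvert,
      connectionMatrix_sub_card_inter hdim e.2 f.2, one_apply, neg_ite, Subtype.ext_iff]
  calc (connectionMatrix p).det = N.det := (det_submatrix_equiv_self _ _).symm
    _ = (-1 : Matrix {x : Subtype p // ¬x.1.card = 1} _ ℤ).det := by
      rw [← fromBlocks_toBlocks N, hvertices, det_fromBlocks_one₁₁, hschur]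
    _ = ∏ x : Subtype p, (-1 : ℤ) ^ (x.1.card - 1) := by
      rw [prod_neg_one_pow_card_sub_one hdim, det_neg, det_one, mul_one]

end OneDimensionalComplex

namespace SimpleGraph

variable {V : Type*} [DecidableEq V] (G : SimpleGraph V)

def IsSimplex (s : Finset V) : Prop :=
  s.card = 1 ∨ ∃ a b, G.Adj a b ∧ s = {a, b}

instance [Fintype V] [DecidableRel G.Adj] : DecidablePred G.IsSimplex := fun s => by
  unfold IsSimplex; infer_instance

variable {G}

lemma IsSimplex.card_eq_one_or_two {s : Finset V} (hs : G.IsSimplex s) :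
    s.card = 1 ∨ s.card = 2 := by
  rcases hs with h | ⟨a, b, hab, rfl⟩
  · exact Or.inl h
  · exact Or.inr (card_pair hab.ne)

lemma isSimplex_singleton (v : V) : G.IsSimplex {v} := Or.inl (card_singleton v)

lemma isSimplex_toFinset {e : Sym2 V} (he : e ∈ G.edgeSet) : G.IsSimplex e.toFinset := by
  induction e using Sym2.ind with
  | h a b => exact Or.inr ⟨a, b, he, Sym2.toFinset_mk_eq⟩

variable (G) [Fintype (Subtype G.IsSimplex)]

lemma card_vertexSimplices [Fintype V] :
    Fintype.card {x : Subtype G.IsSimplex // x.1.card = 1} = Fintype.card V := by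
  refine (Fintype.card_of_bijective (f := fun v : V =>
    (⟨⟨{v}, isSimplex_singleton v⟩, card_singleton v⟩ : {x : Subtype G.IsSimplex // x.1.card = 1}))
    ⟨fun v w h => by simpa [Subtype.ext_iff] using h, ?_⟩).symm
  rintro ⟨⟨s, hs⟩, hcard⟩
  obtain ⟨a, rfl⟩ := card_eq_one.1 hcard
  exact ⟨a, rfl⟩

lemma card_edgeSimplices [Fintype G.edgeSet] :
    Fintype.card {x : Subtype G.IsSimplex // ¬x.1.card = 1} = #G.edgeFinset := by
  rw [edgeFinset_card]
  refine (Fintype.card_of_bijective (f := fun e : G.edgeSet =>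
    (⟨⟨e.1.toFinset, isSimplex_toFinset e.2⟩, by
      rw [Sym2.card_toFinset_of_not_isDiag _ (G.not_isDiag_of_mem_edgeSet e.2)]; decide⟩ :
      {x : Subtype G.IsSimplex // ¬x.1.card = 1})) ⟨?_, ?_⟩).symm
  · intro e f h
    refine Subtype.ext (Sym2.ext fun v => ?_)
    simpa using congrArg (v ∈ ·.1.1) h
  · rintro ⟨⟨s, hs | ⟨a, b, hab, rfl⟩⟩, hcard⟩
    · exact absurd hs hcard
    · exact ⟨⟨s(a, b), hab⟩, by simp [Sym2.toFinset_mk_eq]⟩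

lemma card_simplices [Fintype V] [Fintype G.edgeSet] :
    Fintype.card (Subtype G.IsSimplex) = Fintype.card V + #G.edgeFinset := by
  rw [← card_vertexSimplices G, ← card_edgeSimplices G, ← Fintype.card_sum,
    Fintype.card_congr (Equiv.sumCompl _)]

end SimpleGraph

/-- The connection matrix of the Möbius–Kantor graph is a unimodular 40×40 matrix with
determinant `1`, the Fermi characteristic `(+1)^16 * (-1)^24` of `MK`. -/
theorem connection_matrix_det_moebiusKantor :
    Fintype.card MKSimplex = 40 ∧ connL.det = 1 ∧
    connL.det = ∏ x : MKSimplex, (-1 : ℤ) ^ (x.val.card - 1) := by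
  have hedges : #MK.edgeFinset = 24 := by decide
  -- `MKSimplex` and `connL` are `Subtype MK.IsSimplex` and `connectionMatrix MK.IsSimplex` unfolded.
  have hfermi : connL.det = ∏ x : MKSimplex, (-1 : ℤ) ^ (x.val.card - 1) :=
    det_connectionMatrix (p := MK.IsSimplex) (fun _ hs => hs.card_eq_one_or_two)
      (fun _ _ v _ => SimpleGraph.isSimplex_singleton v)
  refine ⟨?_, ?_, hfermi⟩
  · rw [show Fintype.card MKSimplex = _ from MK.card_simplices, hedges]
    rfl
  · have hcharacteristic := prod_neg_one_pow_card_sub_one (p := MK.IsSimplex)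
      (fun _ hs => hs.card_eq_one_or_two)
    rw [MK.card_edgeSimplices, hedges] at hcharacteristic
    exact hfermi.trans (hcharacteristic.trans (by norm_num))
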